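/- arXiv:1904.12141 — 5 statements merged into one kernel-verified Lean document; each statement's English description precedes it below -/
import Mathlib

section
/- If G is a connected graph on at least 3 vertices and S is an annihilation set of G (i.e., the sum of the degrees of vertices in S is at most m(G)) of maximum cardinality a(G), then every leaf (vertex of degree 1) of G belongs to S, or else S can be modified to an optimal annihilation set containing all leaves. More precisely: every optimal annihilation set can be replaced by one of the same cardinality containing all leaves of G. -/
open Classical Finset
noncomputable section

/-- `S` is a 2-dominating set of `G`: every vertex outside `S` has ≥ 2 neighbors in `S`. -/
def IsTwoDomSet {V : Type*} [Fintype V] (G : SimpleGraph V) (S : Finset V) : Prop :=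
  ∀ v, v ∉ S → 2 ≤ (G.neighborFinset v ∩ S).card

/-- The 2-domination number. -/
noncomputable def gamma2 {V : Type*} [Fintype V] (G : SimpleGraph V) : ℕ :=
  sInf {k | ∃ S : Finset V, IsTwoDomSet G S ∧ S.card = k}

/-- `S` is an annihilation set of `G`: the sum of degrees over `S` is at most `m(G)`. -/
def IsAnnSet {V : Type*} [Fintype V] (G : SimpleGraph V) (S : Finset V) : Prop :=
  ∑ v ∈ S, G.degree v ≤ G.edgeFinset.card

/-- The annihilation number: the largest size of an annihilation set (equivalently, the
largest `k` such that the sum of the `k` smallest degrees is at most the edge count). -/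
noncomputable def annihilation {V : Type*} [Fintype V] (G : SimpleGraph V) : ℕ :=
  sSup {k | ∃ S : Finset V, IsAnnSet G S ∧ S.card = k}

/-! Leaves of a connected graph on at least three vertices are pairwise non-adjacent, so sending
each leaf to its pendant edge is injective: the leaves form an annihilation set, and by maximality
there are at most `|S|` of them. As no vertex is isolated, exchanging vertices of `S` for the
missing leaves (of degree `1`) does not raise the degree sum, which therefore stays `≤ m(G)`. -/

namespace Finset

variable {α : Type*} [DecidableEq α]

lemma exists_superset_card_eq_sum_le {f : α → ℕ} {L S : Finset α} (hcard : #L ≤ #S)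
    (hL : ∀ x ∈ L, f x ≤ 1) (hS : ∀ x ∈ S, 1 ≤ f x) :
    ∃ T, L ⊆ T ∧ #T = #S ∧ ∑ x ∈ T, f x ≤ ∑ x ∈ S, f x := by
  obtain ⟨T, hLT, hTLS, hT⟩ :=
    exists_subsuperset_card_eq subset_union_left hcard (card_le_card subset_union_right)
  refine ⟨T, hLT, hT, ?_⟩
  have hnew : ∑ x ∈ T \ S, f x ≤ #(T \ S) := by
    simpa using sum_le_card_nsmul _ _ 1 fun x hx ↦
      hL x <| (mem_union.mp (hTLS (mem_sdiff.mp hx).1)).resolve_right (mem_sdiff.mp hx).2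
  have hold : #(S \ T) ≤ ∑ x ∈ S \ T, f x := by
    simpa using card_nsmul_le_sum _ _ 1 fun x hx ↦ hS x (mem_sdiff.mp hx).1
  calc ∑ x ∈ T, f x = ∑ x ∈ T ∩ S, f x + ∑ x ∈ T \ S, f x := (sum_inter_add_sum_sdiff T S f).symm
    _ ≤ ∑ x ∈ S ∩ T, f x + #(S \ T) := by rw [inter_comm, ← card_sdiff_comm hT]; gcongr
    _ ≤ ∑ x ∈ S ∩ T, f x + ∑ x ∈ S \ T, f x := by gcongr
    _ = ∑ x ∈ S, f x := sum_inter_add_sum_sdiff S T f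

end Finset

namespace SimpleGraph

variable {V : Type*} [Fintype V] {G : SimpleGraph V}

lemma card_le_card_edgeFinset_of_isIndepSet {s : Finset V} (hind : G.IsIndepSet s)
    (hs : ∀ x ∈ s, ∃ y, G.Adj x y) : #s ≤ #G.edgeFinset := by
  choose! w hw using hs
  refine card_le_card_of_injOn (fun x ↦ s(x, w x)) (fun x hx ↦ by simpa using hw x hx) ?_
  intro x hx y hy hxy
  by_contra hne
  rcases Sym2.eq_iff.mp hxy with ⟨h, -⟩ | ⟨-, h⟩
  · exact hne h
  · exact hind hx hy hne (h ▸ hw x hx)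

lemma Connected.not_adj_of_degree_eq_one (hconn : G.Connected) (hn : 3 ≤ Fintype.card V)
    {x y : V} (hx : G.degree x = 1) (hy : G.degree y = 1) : ¬G.Adj x y := by
  intro hxy
  have hx_nbr : ∀ w, G.Adj x w → w = y := fun w hw ↦
    (degree_eq_one_iff_existsUnique_adj.mp hx).unique hw hxy
  have hy_nbr : ∀ w, G.Adj y w → w = x := fun w hw ↦
    (degree_eq_one_iff_existsUnique_adj.mp hy).unique hw hxy.symm
  obtain ⟨z, -, hz⟩ : ∃ z ∈ univ, z ∉ ({x, y} : Finset V) :=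
    exists_mem_notMem_of_card_lt_card <| card_le_two.trans_lt <| by simp; omega
  -- `{x, y}` is closed under adjacency, yet a walk from `x` to `z` must leave it.
  obtain ⟨d, -, hfst, hsnd⟩ :=
    (hconn.preconnected x z).some.exists_boundary_dart {x, y} (by simp) (by simpa using hz)
  rcases hfst with hd | hd
  · exact hsnd (Or.inr (hx_nbr _ (hd ▸ d.adj)))
  · exact hsnd (Or.inl (hy_nbr _ (hd ▸ d.adj)))

lemma Connected.degree_pos (hconn : G.Connected) (hn : 1 < Fintype.card V) (v : V) :
    0 < G.degree v :=
  haveI := Fintype.one_lt_card_iff_nontrivial.mp hn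
  hconn.preconnected.degree_pos_of_nontrivial v

end SimpleGraph

lemma IsAnnSet.card_le_annihilation {V : Type*} [Fintype V] {G : SimpleGraph V} {A : Finset V}
    (hA : IsAnnSet G A) : #A ≤ annihilation G :=
  le_csSup ⟨Fintype.card V, by rintro k ⟨B, -, rfl⟩; exact B.card_le_univ⟩ ⟨A, hA, rfl⟩

lemma isAnnSet_leaves {V : Type*} [Fintype V] {G : SimpleGraph V} (hconn : G.Connected)
    (hn : 3 ≤ Fintype.card V) : IsAnnSet G {v | G.degree v = 1} := by
  have hind : G.IsIndepSet ({v | G.degree v = 1} : Finset V) := fun x hx y hy _ ↦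
    hconn.not_adj_of_degree_eq_one hn (by simpa using hx) (by simpa using hy)
  have hnbr : ∀ x ∈ ({v | G.degree v = 1} : Finset V), ∃ y, G.Adj x y := fun x _ ↦
    (G.degree_pos_iff_exists_adj x).mp (hconn.degree_pos (by omega) x)
  unfold IsAnnSet
  rw [sum_const_nat fun v hv ↦ (mem_filter.mp hv).2, mul_one]
  exact SimpleGraph.card_le_card_edgeFinset_of_isIndepSet hind hnbr

/-- In a connected graph on at least 3 vertices, every optimal annihilation set can be
replaced by an optimal annihilation set of the same cardinality containing all leaves. -/
theorem stmt2 {V : Type*} [Fintype V] (G : SimpleGraph V) (hconn : G.Connected)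
    (hn : 3 ≤ Fintype.card V) (S : Finset V) (hS : IsAnnSet G S)
    (hopt : S.card = annihilation G) :
    ∃ T : Finset V, IsAnnSet G T ∧ T.card = S.card ∧ ∀ v : V, G.degree v = 1 → v ∈ T := by
  have hleaves : #({v | G.degree v = 1} : Finset V) ≤ #S :=
    hopt ▸ (isAnnSet_leaves hconn hn).card_le_annihilation
  obtain ⟨T, hLT, hT, hsum⟩ := exists_superset_card_eq_sum_le (f := fun v ↦ G.degree v) hleaves
    (fun v hv ↦ (mem_filter.mp hv).2.le) (fun v _ ↦ hconn.degree_pos (by omega) v)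
  exact ⟨T, hsum.trans hS, hT, fun v hv ↦ hLT (by simpa using hv)⟩
end
end

section
/- Let G be a graph on at least four vertices and u ∈ V(G) a strong support vertex whose pendant neighbors are v₁,…,v_ℓ with ℓ ≥ 2. If G' = G − {u, v₁,…,v_ℓ} is a connected graph, then γ₂(G') ≤ a(G') + 1 implies γ₂(G) ≤ a(G) + 1. -/
open Classical Finset
noncomputable section

/-!
Write `G'` for the graph left after deleting `u` and its leaves `L = {v₁, …, v_ℓ}`. A minimum
2-dominating set of `G'` together with `L` 2-dominates `G`, since `u` has two neighbours in `L`;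
so `γ₂(G) ≤ γ₂(G') + ℓ`. A maximum annihilation set of `G'` together with `L` is an annihilation
set of `G`: a vertex of `G'` gains at most the edge to `u`, so these gains total at most
`deg u - ℓ`, the leaves add degree `ℓ`, and `m(G) ≥ m(G') + deg u`. Hence `a(G') + ℓ ≤ a(G)`.
-/

namespace SimpleGraph

variable {V : Type*} [Fintype V] (G : SimpleGraph V)

theorem gamma2_le_card {S : Finset V} (hS : IsTwoDomSet G S) : gamma2 G ≤ #S :=
  Nat.sInf_le ⟨S, hS, rfl⟩

theorem exists_isTwoDomSet_card_eq_gamma2 : ∃ S, IsTwoDomSet G S ∧ #S = gamma2 G :=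
  Nat.sInf_mem (s := {k | ∃ S : Finset V, IsTwoDomSet G S ∧ #S = k})
    ⟨_, univ, fun v hv => absurd (mem_univ v) hv, rfl⟩

theorem bddAbove_card_isAnnSet : BddAbove {k | ∃ A : Finset V, IsAnnSet G A ∧ #A = k} :=
  ⟨Fintype.card V, by rintro _ ⟨A, -, rfl⟩; exact card_le_univ A⟩

theorem card_le_annihilation {A : Finset V} (hA : IsAnnSet G A) : #A ≤ annihilation G :=
  le_csSup G.bddAbove_card_isAnnSet ⟨A, hA, rfl⟩

theorem exists_isAnnSet_card_eq_annihilation : ∃ A, IsAnnSet G A ∧ #A = annihilation G :=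
  Nat.sSup_mem (s := {k | ∃ A : Finset V, IsAnnSet G A ∧ #A = k}) ⟨0, ∅, by simp [IsAnnSet], rfl⟩
    G.bddAbove_card_isAnnSet

variable (T : Set V) [DecidablePred (· ∈ T)]

theorem degree_induce_add_card_sdiff (x : T) :
    (G.induce T).degree x + #(G.neighborFinset x \ T.toFinset) = G.degree x := by
  rw [← card_neighborFinset_eq_degree, ← card_map (.subtype (· ∈ T)), map_neighborFinset_induce,
    card_inter_add_card_sdiff, card_neighborFinset_eq_degree]

theorem card_edgeFinset_induce_add_degree_le {u : V} (hu : u ∉ T) :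
    #(G.induce T).edgeFinset + G.degree u ≤ #G.edgeFinset := by
  rw [← card_map (Function.Embedding.subtype (· ∈ T)).sym2Map, map_edgeFinset_induce,
    ← card_incidenceFinset_eq_degree, ← card_union_of_disjoint]
  · exact card_le_card (union_subset inter_subset_left (G.incidenceFinset_subset u))
  · refine Finset.disjoint_left.mpr fun e he heu => hu ?_
    rw [mem_inter, mem_sym2_iff] at he
    simpa using he.2 u ((G.mem_incidenceFinset _ e).mp heu).2

theorem isTwoDomSet_map_subtype_union {S : Finset T} (hS : IsTwoDomSet (G.induce T) S)
    {R : Finset V} (hR : ∀ w ∉ T, w ∉ R → 2 ≤ #(G.neighborFinset w ∩ R)) :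
    IsTwoDomSet G (S.map (.subtype (· ∈ T)) ∪ R) := by
  intro w hw
  rw [mem_union, not_or] at hw
  by_cases hwT : w ∈ T
  · have hS' := hS ⟨w, hwT⟩ fun h => hw.1 (mem_map_of_mem _ h)
    rw [← card_map (.subtype (· ∈ T))] at hS'
    refine hS'.trans (card_le_card fun y hy => ?_)
    simp only [mem_map, mem_inter, mem_neighborFinset] at hy
    obtain ⟨z, ⟨hwz, hz⟩, rfl⟩ := hy
    exact mem_inter.mpr
      ⟨(G.mem_neighborFinset _ _).mpr hwz, mem_union_left _ (mem_map_of_mem _ hz)⟩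
  · exact (hR w hwT hw.2).trans (card_le_card (inter_subset_inter_left subset_union_right))

theorem gamma2_le_gamma2_induce_add {R : Finset V}
    (hR : ∀ w ∉ T, w ∉ R → 2 ≤ #(G.neighborFinset w ∩ R)) :
    gamma2 G ≤ gamma2 (G.induce T) + #R := by
  obtain ⟨S, hS, hcard⟩ := (G.induce T).exists_isTwoDomSet_card_eq_gamma2
  calc gamma2 G ≤ #(S.map (.subtype (· ∈ T)) ∪ R) :=
      G.gamma2_le_card (G.isTwoDomSet_map_subtype_union T hS hR)
    _ ≤ #(S.map (.subtype (· ∈ T))) + #R := card_union_le _ _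
    _ = gamma2 (G.induce T) + #R := by rw [card_map, hcard]

section PendantStar

variable {T} {u : V} (hT : ∀ x ∈ T, ∀ y ∉ T, G.Adj x y → y = u)
include hT

theorem sum_card_neighborFinset_sdiff_le (A : Finset T) :
    ∑ x ∈ A, #(G.neighborFinset x \ T.toFinset) ≤ #(G.neighborFinset u ∩ T.toFinset) := by
  have hterm : ∀ x : T, #(G.neighborFinset x \ T.toFinset) ≤ if G.Adj u x then 1 else 0 := by
    intro x
    split_ifs with hux
    · refine card_le_one.mpr fun y hy z hz => ?_
      simp only [mem_sdiff, mem_neighborFinset, Set.mem_toFinset] at hy hz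
      rw [hT x x.2 y hy.2 hy.1, hT x x.2 z hz.2 hz.1]
    · refine (card_eq_zero.mpr (eq_empty_of_forall_notMem fun y hy => hux ?_)).le
      simp only [mem_sdiff, mem_neighborFinset, Set.mem_toFinset] at hy
      exact hT x x.2 y hy.2 hy.1 ▸ hy.1.symm
  calc ∑ x ∈ A, #(G.neighborFinset x \ T.toFinset)
      ≤ ∑ x ∈ A, if G.Adj u x then 1 else 0 := sum_le_sum fun x _ => hterm x
    _ = #(A.filter fun x : T => G.Adj u x) := (card_filter _ _).symm
    _ ≤ #(G.neighborFinset u ∩ T.toFinset) :=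
      card_le_card_of_injOn Subtype.val (fun x hx => by simp_all) Subtype.val_injective.injOn

theorem annihilation_induce_add_card_le {L : Finset V} (huT : u ∉ T) (hLT : ∀ w ∈ L, w ∉ T)
    (hLu : L ⊆ G.neighborFinset u) (hLdeg : ∀ w ∈ L, G.degree w = 1) :
    annihilation (G.induce T) + #L ≤ annihilation G := by
  obtain ⟨A, hA, hcard⟩ := (G.induce T).exists_isAnnSet_card_eq_annihilation
  have hdisj : Disjoint (A.map (.subtype (· ∈ T))) L :=
    Finset.disjoint_left.mpr fun w hw hwL => by
      obtain ⟨x, -, rfl⟩ := mem_map.mp hw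
      exact hLT _ hwL x.2
  have hLN : #(G.neighborFinset u ∩ T.toFinset) + #L ≤ G.degree u := by
    rw [← card_union_of_disjoint, ← card_neighborFinset_eq_degree]
    · exact card_le_card (union_subset inter_subset_left hLu)
    · exact Finset.disjoint_left.mpr fun w hw hwL => hLT w hwL (by simpa using (mem_inter.mp hw).2)
  suffices hAL : IsAnnSet G (A.map (.subtype (· ∈ T)) ∪ L) by
    have := G.card_le_annihilation hAL
    rwa [card_union_of_disjoint hdisj, card_map, hcard] at this
  calc ∑ w ∈ A.map (.subtype (· ∈ T)) ∪ L, G.degree w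
      = ∑ x ∈ A, (G.induce T).degree x + ∑ x ∈ A, #(G.neighborFinset x \ T.toFinset) + #L := by
        rw [sum_union hdisj, sum_map, sum_congr rfl hLdeg, sum_const, smul_eq_mul, mul_one,
          ← sum_add_distrib]
        exact congrArg (· + #L) (sum_congr rfl fun x _ => (G.degree_induce_add_card_sdiff T x).symm)
    _ ≤ #(G.induce T).edgeFinset + #(G.neighborFinset u ∩ T.toFinset) + #L := by
        gcongr
        · exact hA
        · exact G.sum_card_neighborFinset_sdiff_le hT A
    _ ≤ #G.edgeFinset := by
        have := G.card_edgeFinset_induce_add_degree_le T huT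
        omega

end PendantStar

end SimpleGraph

open SimpleGraph

theorem stmt3_general {V : Type*} [Fintype V] (G : SimpleGraph V)
    (u : V) (ℓ : ℕ) (hℓ : 2 ≤ ℓ) (v : Fin ℓ → V) (hinj : Function.Injective v)
    (hadj : ∀ i, G.Adj u (v i)) (hdeg : ∀ i, G.degree (v i) = 1)
    (h : gamma2 (G.induce {w : V | w ≠ u ∧ ∀ i, w ≠ v i}) ≤
          annihilation (G.induce {w : V | w ≠ u ∧ ∀ i, w ≠ v i}) + 1) :
    gamma2 G ≤ annihilation G + 1 := by
  set T : Set V := {w : V | w ≠ u ∧ ∀ i, w ≠ v i}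
  set L : Finset V := univ.image v
  have hL : #L = ℓ := by rw [card_image_of_injective _ hinj, card_univ, Fintype.card_fin]
  have hLu : L ⊆ G.neighborFinset u := by simp [L, subset_iff, hadj]
  have hLT : ∀ w ∈ L, w ∉ T := by simp [L, T]
  have hTc : ∀ w ∉ T, w = u ∨ w ∈ L := by
    simp only [T, L, Set.mem_ofPred_eq, not_and, not_forall, not_not, mem_image, mem_univ, true_and]
    exact fun w hw => (Classical.em (w = u)).imp_right fun hwu => (hw hwu).imp fun i => Eq.symm
  have hT : ∀ x ∈ T, ∀ y ∉ T, G.Adj x y → y = u := by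
    intro x hx y hy hxy
    refine (hTc y hy).resolve_right fun hyL => hx.1 ?_
    obtain ⟨i, -, rfl⟩ := mem_image.mp hyL
    exact (degree_eq_one_iff_existsUnique_adj.mp (hdeg i)).unique hxy.symm (hadj i).symm
  have hγ : gamma2 G ≤ gamma2 (G.induce T) + #L :=
    G.gamma2_le_gamma2_induce_add T fun w hwT hwL => by
      rw [(hTc w hwT).resolve_right hwL, inter_eq_right.mpr hLu, hL]
      exact hℓ
  have ha : annihilation (G.induce T) + #L ≤ annihilation G :=
    G.annihilation_induce_add_card_le hT (fun hu => hu.1 rfl) hLT hLu (by simp [L, hdeg])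
  change gamma2 (G.induce T) ≤ annihilation (G.induce T) + 1 at h
  omega

/-- Lemma 3.1: removing a strong support vertex together with all its pendant neighbors
preserves the bound `γ₂ ≤ a + 1` (provided the remaining graph is connected). -/
theorem stmt3 {V : Type*} [Fintype V] (G : SimpleGraph V) (h4 : 4 ≤ Fintype.card V)
    (u : V) (ℓ : ℕ) (hℓ : 2 ≤ ℓ) (v : Fin ℓ → V) (hinj : Function.Injective v)
    (hadj : ∀ i, G.Adj u (v i)) (hdeg : ∀ i, G.degree (v i) = 1)
    (hall : ∀ w, G.Adj u w → G.degree w = 1 → ∃ i, w = v i)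
    (hconn : (G.induce {w : V | w ≠ u ∧ ∀ i, w ≠ v i}).Connected)
    (h : gamma2 (G.induce {w : V | w ≠ u ∧ ∀ i, w ≠ v i}) ≤
          annihilation (G.induce {w : V | w ≠ u ∧ ∀ i, w ≠ v i}) + 1) :
    gamma2 G ≤ annihilation G + 1 :=
  stmt3_general G u ℓ hℓ v hinj hadj hdeg h
end
end

section
/- Let G be a connected graph with d*(G) ≥ 3 which contains an induced path v u₁ u₂ u₃ w where d(u₁) = d(u₂) = d(u₃) = 2. Let G' = G − {u₁, u₂, u₃} + vw. Then γ₂(G) ≤ γ₂(G') + 2 and a(G) ≥ a(G') + 2; hence γ₂(G') ≤ a(G') + 1 implies γ₂(G) ≤ a(G) + 1. -/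
open Classical Finset
noncomputable section

/-- The graph obtained from `G` by deleting the vertices in `S` and adding an edge `ab`. -/
def removeAddEdge {V : Type*} (G : SimpleGraph V) (S : Set V) (a b : {x : V // x ∉ S}) :
    SimpleGraph {x : V // x ∉ S} :=
  (G.comap Subtype.val) ⊔ SimpleGraph.fromEdgeSet {s(a, b)}

lemma nbrs_eq {V : Type*} [Fintype V] (G : SimpleGraph V)
    (u a b : V) (hab : a ≠ b) (ha : G.Adj u a) (hb : G.Adj u b) (hd : G.degree u = 2) :
    ∀ x, G.Adj u x ↔ (x = a ∨ x = b) := by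
  classical
  have hsub : ({a, b} : Finset V) ⊆ G.neighborFinset u := by
    intro x hx; simp only [Finset.mem_insert, Finset.mem_singleton] at hx
    rcases hx with rfl | rfl <;> simp [ha, hb]
  have hcard : ({a, b} : Finset V).card = 2 := by
    rw [Finset.card_insert_of_notMem (by simpa using hab), Finset.card_singleton]
  have heq : ({a, b} : Finset V) = G.neighborFinset u :=
    Finset.eq_of_subset_of_card_le hsub (by
      rw [hcard]
      exact le_of_eq ((G.card_neighborFinset_eq_degree u).trans hd))
  intro x
  rw [← SimpleGraph.mem_neighborFinset, ← heq]
  simp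

lemma radj {V : Type*} (G : SimpleGraph V) (S : Set V) (a b : {x : V // x ∉ S}) (hab : a ≠ b)
    (x y : {x : V // x ∉ S}) :
    (removeAddEdge G S a b).Adj x y ↔
      G.Adj x.1 y.1 ∨ ((x = a ∧ y = b) ∨ (x = b ∧ y = a)) := by
  constructor
  · rintro (h | h)
    · exact Or.inl h
    · rw [SimpleGraph.fromEdgeSet_adj] at h
      simp only [Set.mem_singleton_iff, Sym2.eq_iff] at h
      exact Or.inr h.1
  · rintro (h | h)
    · exact Or.inl h
    · refine Or.inr ?_
      rw [SimpleGraph.fromEdgeSet_adj]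
      constructor
      · simp only [Set.mem_singleton_iff, Sym2.eq_iff]; exact h
      · rcases h with ⟨rfl, rfl⟩ | ⟨rfl, rfl⟩
        · exact hab
        · exact hab.symm

lemma deg_eq {V : Type*} [Fintype V] (G : SimpleGraph V)
    (v u₁ u₂ u₃ w : V)
    (hv : v ∉ ({u₁, u₂, u₃} : Set V)) (hw : w ∉ ({u₁, u₂, u₃} : Set V))
    (hvw : v ≠ w) (h12 : u₁ ≠ u₂) (h13 : u₁ ≠ u₃) (h23 : u₂ ≠ u₃)
    (hp1 : G.Adj v u₁) (hp2 : G.Adj u₁ u₂) (hp3 : G.Adj u₂ u₃) (hp4 : G.Adj u₃ w)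
    (hi3 : ¬ G.Adj v w)
    (hd1 : G.degree u₁ = 2) (hd2 : G.degree u₂ = 2) (hd3 : G.degree u₃ = 2)
    (x : {x : V // x ∉ ({u₁, u₂, u₃} : Set V)}) :
    (removeAddEdge G {u₁, u₂, u₃} ⟨v, hv⟩ ⟨w, hw⟩).degree x = G.degree x.1 := by
  classical
  have hvne : v ≠ u₁ ∧ v ≠ u₂ ∧ v ≠ u₃ := by
    refine ⟨?_, ?_, ?_⟩ <;> (intro h; exact hv (by simp [h]))
  have hwne : w ≠ u₁ ∧ w ≠ u₂ ∧ w ≠ u₃ := by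
    refine ⟨?_, ?_, ?_⟩ <;> (intro h; exact hw (by simp [h]))
  have Hu1 : ∀ x, G.Adj u₁ x ↔ (x = v ∨ x = u₂) :=
    nbrs_eq G u₁ v u₂ hvne.2.1 hp1.symm hp2 hd1
  have Hu2 : ∀ x, G.Adj u₂ x ↔ (x = u₁ ∨ x = u₃) :=
    nbrs_eq G u₂ u₁ u₃ h13 hp2.symm hp3 hd2
  have Hu3 : ∀ x, G.Adj u₃ x ↔ (x = u₂ ∨ x = w) :=
    nbrs_eq G u₃ u₂ w hwne.2.1.symm hp3.symm hp4 hd3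
  have habV : (⟨v, hv⟩ : {x : V // x ∉ ({u₁, u₂, u₃} : Set V)}) ≠ ⟨w, hw⟩ := by
    simp [Subtype.ext_iff, hvw]
  set G' := removeAddEdge G {u₁, u₂, u₃} ⟨v, hv⟩ ⟨w, hw⟩ with hG'
  have hdeg : G'.degree x = ((G'.neighborFinset x).image Subtype.val).card := by
    rw [Finset.card_image_of_injective _ Subtype.val_injective,
      SimpleGraph.card_neighborFinset_eq_degree]
  have hmem : ∀ y : V, y ∈ (G'.neighborFinset x).image Subtype.val ↔
      ∃ h : y ∉ ({u₁, u₂, u₃} : Set V), G'.Adj x ⟨y, h⟩ := by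
    intro y
    simp only [Finset.mem_image, SimpleGraph.mem_neighborFinset]
    constructor
    · rintro ⟨z, hz, rfl⟩; exact ⟨z.2, hz⟩
    · rintro ⟨h, hadj⟩; exact ⟨⟨y, h⟩, hadj, rfl⟩
  by_cases hxv : x = ⟨v, hv⟩
  · subst hxv
    have himg : (G'.neighborFinset ⟨v, hv⟩).image Subtype.val
        = insert w ((G.neighborFinset v).erase u₁) := by
      ext y
      rw [hmem]
      simp only [Finset.mem_insert, Finset.mem_erase, SimpleGraph.mem_neighborFinset]
      constructor
      · rintro ⟨h, hadj⟩
        rw [hG', radj G {u₁, u₂, u₃} _ _ habV] at hadj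
        rcases hadj with hadj | ⟨h1, h2⟩ | ⟨h1, h2⟩
        · refine Or.inr ⟨?_, hadj⟩
          intro he; exact h (by simp [he])
        · exact Or.inl (congrArg Subtype.val h2)
        · exact absurd (congrArg Subtype.val h1) (by simp [hvw])
      · rintro (rfl | ⟨hne, hadj⟩)
        · exact ⟨hw, by rw [hG', radj G {u₁, u₂, u₃} _ _ habV]; exact Or.inr (Or.inl ⟨rfl, rfl⟩)⟩
        · have hy : y ∉ ({u₁, u₂, u₃} : Set V) := by
            intro hyS
            simp only [Set.mem_insert_iff, Set.mem_singleton_iff] at hyS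
            rcases hyS with rfl | rfl | rfl
            · exact hne rfl
            · exact (by simpa [Hu2] using hadj.symm : v = u₁ ∨ v = u₃).elim
                (fun h => hvne.1 h) (fun h => hvne.2.2 h)
            · exact (by simpa [Hu3] using hadj.symm : v = u₂ ∨ v = w).elim
                (fun h => hvne.2.1 h) (fun h => hvw h)
          exact ⟨hy, by rw [hG', radj G {u₁, u₂, u₃} _ _ habV]; exact Or.inl hadj⟩
    rw [hdeg, himg, Finset.card_insert_of_notMem (by
        simp only [Finset.mem_erase, SimpleGraph.mem_neighborFinset]
        rintro ⟨-, hadj⟩; exact hi3 hadj),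
      Finset.card_erase_of_mem (by simpa using hp1)]
    have h1d : 1 ≤ G.degree v := by
      rw [← SimpleGraph.card_neighborFinset_eq_degree]
      exact Finset.card_pos.mpr ⟨u₁, by simpa using hp1⟩
    simp only [SimpleGraph.card_neighborFinset_eq_degree]
    omega
  · by_cases hxw : x = ⟨w, hw⟩
    · subst hxw
      have himg : (G'.neighborFinset ⟨w, hw⟩).image Subtype.val
          = insert v ((G.neighborFinset w).erase u₃) := by
        ext y
        rw [hmem]
        simp only [Finset.mem_insert, Finset.mem_erase, SimpleGraph.mem_neighborFinset]
        constructor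
        · rintro ⟨h, hadj⟩
          rw [hG', radj G {u₁, u₂, u₃} _ _ habV] at hadj
          rcases hadj with hadj | ⟨h1, h2⟩ | ⟨h1, h2⟩
          · refine Or.inr ⟨?_, hadj⟩
            intro he; exact h (by simp [he])
          · exact absurd (congrArg Subtype.val h1) (by simp [hvw.symm])
          · exact Or.inl (congrArg Subtype.val h2)
        · rintro (rfl | ⟨hne, hadj⟩)
          · exact ⟨hv, by rw [hG', radj G {u₁, u₂, u₃} _ _ habV]; exact Or.inr (Or.inr ⟨rfl, rfl⟩)⟩
          · have hy : y ∉ ({u₁, u₂, u₃} : Set V) := by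
              intro hyS
              simp only [Set.mem_insert_iff, Set.mem_singleton_iff] at hyS
              rcases hyS with rfl | rfl | rfl
              · exact (by simpa [Hu1] using hadj.symm : w = v ∨ w = u₂).elim
                  (fun h => hvw h.symm) (fun h => hwne.2.1 h)
              · exact (by simpa [Hu2] using hadj.symm : w = u₁ ∨ w = u₃).elim
                  (fun h => hwne.1 h) (fun h => hwne.2.2 h)
              · exact hne rfl
            exact ⟨hy, by rw [hG', radj G {u₁, u₂, u₃} _ _ habV]; exact Or.inl hadj⟩
      rw [hdeg, himg, Finset.card_insert_of_notMem (by
          simp only [Finset.mem_erase, SimpleGraph.mem_neighborFinset]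
          rintro ⟨-, hadj⟩; exact hi3 hadj.symm),
        Finset.card_erase_of_mem (by simpa using hp4.symm)]
      have h1d : 1 ≤ G.degree w := by
        rw [← SimpleGraph.card_neighborFinset_eq_degree]
        exact Finset.card_pos.mpr ⟨u₃, by simpa using hp4.symm⟩
      simp only [SimpleGraph.card_neighborFinset_eq_degree]
      omega
    · have himg : (G'.neighborFinset x).image Subtype.val = G.neighborFinset x.1 := by
        ext y
        rw [hmem]
        simp only [SimpleGraph.mem_neighborFinset]
        constructor
        · rintro ⟨h, hadj⟩
          rw [hG', radj G {u₁, u₂, u₃} _ _ habV] at hadj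
          rcases hadj with hadj | ⟨h1, -⟩ | ⟨h1, -⟩
          · exact hadj
          · exact absurd h1 hxv
          · exact absurd h1 hxw
        · intro hadj
          have hy : y ∉ ({u₁, u₂, u₃} : Set V) := by
            intro hyS
            simp only [Set.mem_insert_iff, Set.mem_singleton_iff] at hyS
            have hxv' : x.1 ≠ v := fun h => hxv (Subtype.ext h)
            have hxw' : x.1 ≠ w := fun h => hxw (Subtype.ext h)
            rcases hyS with rfl | rfl | rfl
            · exact (by simpa [Hu1] using hadj.symm : x.1 = v ∨ x.1 = u₂).elim
                (fun h => hxv' h) (fun h => x.2 (by simp [h]))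
            · exact (by simpa [Hu2] using hadj.symm : x.1 = u₁ ∨ x.1 = u₃).elim
                (fun h => x.2 (by simp [h])) (fun h => x.2 (by simp [h]))
            · exact (by simpa [Hu3] using hadj.symm : x.1 = u₂ ∨ x.1 = w).elim
                (fun h => x.2 (by simp [h])) (fun h => hxw' h)
          exact ⟨hy, by rw [hG', radj G {u₁, u₂, u₃} _ _ habV]; exact Or.inl hadj⟩
      rw [hdeg, himg, SimpleGraph.card_neighborFinset_eq_degree]

lemma edge_card_eq {V : Type*} [Fintype V] (G : SimpleGraph V)
    (v u₁ u₂ u₃ w : V)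
    (hv : v ∉ ({u₁, u₂, u₃} : Set V)) (hw : w ∉ ({u₁, u₂, u₃} : Set V))
    (h12 : u₁ ≠ u₂) (h13 : u₁ ≠ u₃) (h23 : u₂ ≠ u₃)
    (hd1 : G.degree u₁ = 2) (hd2 : G.degree u₂ = 2) (hd3 : G.degree u₃ = 2)
    (hdall : ∀ x : {x : V // x ∉ ({u₁, u₂, u₃} : Set V)},
      (removeAddEdge G {u₁, u₂, u₃} ⟨v, hv⟩ ⟨w, hw⟩).degree x = G.degree x.1) :
    G.edgeFinset.card = (removeAddEdge G {u₁, u₂, u₃} ⟨v, hv⟩ ⟨w, hw⟩).edgeFinset.card + 3 := by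
  classical
  set G' := removeAddEdge G {u₁, u₂, u₃} ⟨v, hv⟩ ⟨w, hw⟩ with hG'
  have h2G : ∑ x : V, G.degree x = 2 * G.edgeFinset.card :=
    G.sum_degrees_eq_twice_card_edges
  have h2G' : ∑ x : {x : V // x ∉ ({u₁, u₂, u₃} : Set V)}, G'.degree x
      = 2 * G'.edgeFinset.card := G'.sum_degrees_eq_twice_card_edges
  have hsub : ∑ x : {x : V // x ∉ ({u₁, u₂, u₃} : Set V)}, G.degree x.1
      = ∑ x ∈ univ.filter (fun x => x ∉ ({u₁, u₂, u₃} : Set V)), G.degree x :=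
    (Finset.sum_subtype (univ.filter (fun x => x ∉ ({u₁, u₂, u₃} : Set V)))
      (fun x => by simp) (fun x => G.degree x)).symm
  have hsplit := Finset.sum_filter_add_sum_filter_not univ
    (fun x => x ∉ ({u₁, u₂, u₃} : Set V)) (fun x => G.degree x)
  have hfil : univ.filter (fun x => ¬ (x ∉ ({u₁, u₂, u₃} : Set V))) = ({u₁, u₂, u₃} : Finset V) := by
    ext z; simp only [Finset.mem_filter, Finset.mem_univ, true_and, not_not,
      Set.mem_insert_iff, Set.mem_singleton_iff, Finset.mem_insert, Finset.mem_singleton]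
  have hsum3 : ∑ x ∈ ({u₁, u₂, u₃} : Finset V), G.degree x = 6 := by
    rw [Finset.sum_insert (by simp only [Finset.mem_insert, Finset.mem_singleton]; tauto),
      Finset.sum_insert (by simp only [Finset.mem_singleton]; exact h23),
      Finset.sum_singleton, hd1, hd2, hd3]
    omega
  have heq : ∑ x : {x : V // x ∉ ({u₁, u₂, u₃} : Set V)}, G'.degree x
      = ∑ x : {x : V // x ∉ ({u₁, u₂, u₃} : Set V)}, G.degree x.1 :=
    Finset.sum_congr rfl (fun x _ => hdall x)
  rw [hfil, hsum3] at hsplit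
  omega

/-- Lemma 3.2(ii): contracting an induced `P₅` with internal degree-2 vertices. -/
theorem stmt5 {V : Type*} [Fintype V] (G : SimpleGraph V) (hconn : G.Connected)
    (hstar : ∀ S : Finset V, IsAnnSet G S → S.card = annihilation G →
        ∀ w ∉ S, 3 ≤ G.degree w)
    (v u₁ u₂ u₃ w : V)
    (hv : v ∉ ({u₁, u₂, u₃} : Set V)) (hw : w ∉ ({u₁, u₂, u₃} : Set V))
    (hvw : v ≠ w) (h12 : u₁ ≠ u₂) (h13 : u₁ ≠ u₃) (h23 : u₂ ≠ u₃)
    (hp1 : G.Adj v u₁) (hp2 : G.Adj u₁ u₂) (hp3 : G.Adj u₂ u₃) (hp4 : G.Adj u₃ w)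
    (hi1 : ¬ G.Adj v u₂) (hi2 : ¬ G.Adj v u₃) (hi3 : ¬ G.Adj v w)
    (hi4 : ¬ G.Adj u₁ u₃) (hi5 : ¬ G.Adj u₁ w) (hi6 : ¬ G.Adj u₂ w)
    (hd1 : G.degree u₁ = 2) (hd2 : G.degree u₂ = 2) (hd3 : G.degree u₃ = 2) :
    gamma2 G ≤ gamma2 (removeAddEdge G {u₁, u₂, u₃} ⟨v, hv⟩ ⟨w, hw⟩) + 2 ∧
    annihilation (removeAddEdge G {u₁, u₂, u₃} ⟨v, hv⟩ ⟨w, hw⟩) + 2 ≤ annihilation G ∧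
    (gamma2 (removeAddEdge G {u₁, u₂, u₃} ⟨v, hv⟩ ⟨w, hw⟩) ≤
        annihilation (removeAddEdge G {u₁, u₂, u₃} ⟨v, hv⟩ ⟨w, hw⟩) + 1 →
      gamma2 G ≤ annihilation G + 1) := by
  classical
  set G' := removeAddEdge G {u₁, u₂, u₃} ⟨v, hv⟩ ⟨w, hw⟩ with hG'
  have habV : (⟨v, hv⟩ : {x : V // x ∉ ({u₁, u₂, u₃} : Set V)}) ≠ ⟨w, hw⟩ := by
    simp [Subtype.ext_iff, hvw]
  have hdall : ∀ x : {x : V // x ∉ ({u₁, u₂, u₃} : Set V)}, G'.degree x = G.degree x.1 :=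
    deg_eq G v u₁ u₂ u₃ w hv hw hvw h12 h13 h23 hp1 hp2 hp3 hp4 hi3 hd1 hd2 hd3
  have hedge : G.edgeFinset.card = G'.edgeFinset.card + 3 :=
    edge_card_eq G v u₁ u₂ u₃ w hv hw h12 h13 h23 hd1 hd2 hd3 hdall
  -- ### Part 1 : gamma2
  have part1 : gamma2 G ≤ gamma2 G' + 2 := by
    have hne : {k | ∃ S : Finset {x : V // x ∉ ({u₁, u₂, u₃} : Set V)},
        IsTwoDomSet G' S ∧ S.card = k}.Nonempty :=
      ⟨(univ : Finset _).card, univ, fun z hz => absurd (Finset.mem_univ z) hz, rfl⟩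
    obtain ⟨D', hD', hD'card⟩ := Nat.sInf_mem hne
    have hD'card' : D'.card = gamma2 G' := hD'card
    have hD'2 : ∀ t, t ∉ D' → 2 ≤ (G'.neighborFinset t ∩ D').card := by
      intro t ht
      have h := hD' t ht
      convert h using 2
      ext a
      simp [Finset.mem_inter]
    set D : Finset V := D'.image Subtype.val ∪ ({u₁, u₃} : Finset V) with hD
    have hu1D : u₁ ∈ D := by simp [hD]
    have hu3D : u₃ ∈ D := by simp [hD]
    have himgD : ∀ t : {x : V // x ∉ ({u₁, u₂, u₃} : Set V)}, t ∈ D' → t.1 ∈ D := by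
      intro t ht
      exact Finset.mem_union_left _ (Finset.mem_image.mpr ⟨t, ht, rfl⟩)
    have hdom : IsTwoDomSet G D := by
      intro z hz
      have hz1 : z ≠ u₁ := fun h => hz (h ▸ hu1D)
      have hz3 : z ≠ u₃ := fun h => hz (h ▸ hu3D)
      by_cases hz2 : z = u₂
      · have hsub : ({u₁, u₃} : Finset V) ⊆ G.neighborFinset z ∩ D := by
          intro y hy
          simp only [Finset.mem_insert, Finset.mem_singleton] at hy
          rcases hy with rfl | rfl
          · refine Finset.mem_inter.mpr ⟨?_, hu1D⟩
            rw [SimpleGraph.mem_neighborFinset, hz2]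
            exact hp2.symm
          · refine Finset.mem_inter.mpr ⟨?_, hu3D⟩
            rw [SimpleGraph.mem_neighborFinset, hz2]
            exact hp3
        calc 2 = ({u₁, u₃} : Finset V).card := by
                rw [Finset.card_insert_of_notMem (by simpa using h13), Finset.card_singleton]
          _ ≤ _ := Finset.card_le_card hsub
      · by_cases hzv : z = v
        · rw [hzv] at hz ⊢
          have hvD' : (⟨v, hv⟩ : {x : V // x ∉ ({u₁, u₂, u₃} : Set V)}) ∉ D' :=
            fun h => hz (himgD _ h)
          have h2 := hD'2 ⟨v, hv⟩ hvD'
          set E : Finset V := ((G'.neighborFinset ⟨v, hv⟩ ∩ D').erase ⟨w, hw⟩).image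
            Subtype.val with hE
          have hu1E : u₁ ∉ E := by
            intro h
            obtain ⟨t, -, ht⟩ := Finset.mem_image.mp h
            exact t.2 (by simp [ht])
          have hsub : insert u₁ E ⊆ G.neighborFinset v ∩ D := by
            intro y hy
            rcases Finset.mem_insert.mp hy with rfl | hy
            · exact Finset.mem_inter.mpr ⟨by simpa using hp1, hu1D⟩
            · obtain ⟨t, ht, rfl⟩ := Finset.mem_image.mp hy
              obtain ⟨htw, ht2⟩ := Finset.mem_erase.mp ht
              obtain ⟨htn, htD⟩ := Finset.mem_inter.mp ht2
              have hadj : G'.Adj ⟨v, hv⟩ t := by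
                simpa using htn
              rw [hG', radj G {u₁, u₂, u₃} _ _ habV] at hadj
              rcases hadj with hadj | ⟨-, h2'⟩ | ⟨h1', -⟩
              · exact Finset.mem_inter.mpr ⟨by simpa using hadj, himgD _ htD⟩
              · exact absurd h2' htw
              · exact absurd (congrArg Subtype.val h1') hvw
          have hicard : 2 ≤ (insert u₁ E).card := by
            rw [Finset.card_insert_of_notMem hu1E, hE,
              Finset.card_image_of_injective _ Subtype.val_injective]
            have := Finset.pred_card_le_card_erase
              (s := G'.neighborFinset ⟨v, hv⟩ ∩ D') (a := ⟨w, hw⟩)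
            omega
          exact le_trans hicard (Finset.card_le_card hsub)
        · by_cases hzw : z = w
          · rw [hzw] at hz ⊢
            have hwD' : (⟨w, hw⟩ : {x : V // x ∉ ({u₁, u₂, u₃} : Set V)}) ∉ D' :=
              fun h => hz (himgD _ h)
            have h2 := hD'2 ⟨w, hw⟩ hwD'
            set E : Finset V := ((G'.neighborFinset ⟨w, hw⟩ ∩ D').erase ⟨v, hv⟩).image
              Subtype.val with hE
            have hu3E : u₃ ∉ E := by
              intro h
              obtain ⟨t, -, ht⟩ := Finset.mem_image.mp h
              exact t.2 (by simp [ht])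
            have hsub : insert u₃ E ⊆ G.neighborFinset w ∩ D := by
              intro y hy
              rcases Finset.mem_insert.mp hy with rfl | hy
              · exact Finset.mem_inter.mpr ⟨by simpa using hp4.symm, hu3D⟩
              · obtain ⟨t, ht, rfl⟩ := Finset.mem_image.mp hy
                obtain ⟨htv, ht2⟩ := Finset.mem_erase.mp ht
                obtain ⟨htn, htD⟩ := Finset.mem_inter.mp ht2
                have hadj : G'.Adj ⟨w, hw⟩ t := by
                  simpa using htn
                rw [hG', radj G {u₁, u₂, u₃} _ _ habV] at hadj
                rcases hadj with hadj | ⟨h1', -⟩ | ⟨-, h2'⟩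
                · exact Finset.mem_inter.mpr ⟨by simpa using hadj, himgD _ htD⟩
                · exact absurd (congrArg Subtype.val h1') hvw.symm
                · exact absurd h2' htv
            have hicard : 2 ≤ (insert u₃ E).card := by
              rw [Finset.card_insert_of_notMem hu3E, hE,
                Finset.card_image_of_injective _ Subtype.val_injective]
              have := Finset.pred_card_le_card_erase
                (s := G'.neighborFinset ⟨w, hw⟩ ∩ D') (a := ⟨v, hv⟩)
              omega
            exact le_trans hicard (Finset.card_le_card hsub)
          · -- generic vertex
            have hzS : z ∉ ({u₁, u₂, u₃} : Set V) := by
              simp only [Set.mem_insert_iff, Set.mem_singleton_iff]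
              push_neg
              exact ⟨hz1, hz2, hz3⟩
            have hzD' : (⟨z, hzS⟩ : {x : V // x ∉ ({u₁, u₂, u₃} : Set V)}) ∉ D' :=
              fun h => hz (himgD _ h)
            have h2 := hD'2 ⟨z, hzS⟩ hzD'
            set E : Finset V := (G'.neighborFinset ⟨z, hzS⟩ ∩ D').image Subtype.val with hE
            have hsub : E ⊆ G.neighborFinset z ∩ D := by
              intro y hy
              obtain ⟨t, ht, rfl⟩ := Finset.mem_image.mp hy
              obtain ⟨htn, htD⟩ := Finset.mem_inter.mp ht
              have hadj : G'.Adj ⟨z, hzS⟩ t := by simpa using htn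
              rw [hG', radj G {u₁, u₂, u₃} _ _ habV] at hadj
              rcases hadj with hadj | ⟨h1', -⟩ | ⟨h1', -⟩
              · exact Finset.mem_inter.mpr ⟨by simpa using hadj, himgD _ htD⟩
              · exact absurd (congrArg Subtype.val h1') hzv
              · exact absurd (congrArg Subtype.val h1') hzw
            have hEcard : (G'.neighborFinset ⟨z, hzS⟩ ∩ D').card = E.card := by
              rw [hE, Finset.card_image_of_injective _ Subtype.val_injective]
            exact le_trans (hEcard ▸ h2) (Finset.card_le_card hsub)
    have hDcard : D.card ≤ gamma2 G' + 2 := by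
      calc D.card ≤ (D'.image Subtype.val).card + ({u₁, u₃} : Finset V).card :=
            Finset.card_union_le _ _
        _ ≤ D'.card + 2 := by
            rw [Finset.card_image_of_injective _ Subtype.val_injective,
              Finset.card_insert_of_notMem (by simpa using h13), Finset.card_singleton]
        _ = gamma2 G' + 2 := by rw [hD'card']
    exact le_trans (Nat.sInf_le ⟨D, hdom, rfl⟩) hDcard
  -- ### Part 2 : annihilation
  have part2 : annihilation G' + 2 ≤ annihilation G := by
    have hbddG : BddAbove {k | ∃ S : Finset V, IsAnnSet G S ∧ S.card = k} := by
      refine ⟨Fintype.card V, ?_⟩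
      rintro k ⟨S, -, rfl⟩
      exact le_trans (Finset.card_le_card (Finset.subset_univ S)) (le_of_eq Finset.card_univ)
    have hneG : {k | ∃ S : Finset V, IsAnnSet G S ∧ S.card = k}.Nonempty :=
      ⟨0, ∅, by simp [IsAnnSet], rfl⟩
    have hneG' : {k | ∃ S : Finset {x : V // x ∉ ({u₁, u₂, u₃} : Set V)},
        IsAnnSet G' S ∧ S.card = k}.Nonempty :=
      ⟨0, ∅, by simp [IsAnnSet], rfl⟩
    have hbddG' : BddAbove {k | ∃ S : Finset {x : V // x ∉ ({u₁, u₂, u₃} : Set V)},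
        IsAnnSet G' S ∧ S.card = k} := by
      refine ⟨Fintype.card {x : V // x ∉ ({u₁, u₂, u₃} : Set V)}, ?_⟩
      rintro k ⟨S, -, rfl⟩
      exact le_trans (Finset.card_le_card (Finset.subset_univ S)) (le_of_eq Finset.card_univ)
    obtain ⟨S', hS'ann, hS'card⟩ := Nat.sSup_mem hneG' hbddG'
    have hS'card' : S'.card = annihilation G' := hS'card
    have hcard3 : ({u₁, u₂, u₃} : Finset V).card = 3 := by
      rw [Finset.card_insert_of_notMem (by simp only [Finset.mem_insert, Finset.mem_singleton]; tauto), Finset.card_insert_of_notMem (by simp only [Finset.mem_singleton]; exact h23), Finset.card_singleton]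
    have hsum3 : ∑ x ∈ ({u₁, u₂, u₃} : Finset V), G.degree x = 6 := by
      rw [Finset.sum_insert (by simp only [Finset.mem_insert, Finset.mem_singleton]; tauto), Finset.sum_insert (by simp only [Finset.mem_singleton]; exact h23), Finset.sum_singleton, hd1, hd2, hd3]
      omega
    by_cases hx : ∃ t ∈ S', 3 ≤ G.degree t.1
    · obtain ⟨x, hxS, hxdeg⟩ := hx
      set T : Finset V := ((S'.erase x).image Subtype.val) ∪ ({u₁, u₂, u₃} : Finset V)
        with hT
      have hdisj : Disjoint ((S'.erase x).image Subtype.val) ({u₁, u₂, u₃} : Finset V) := by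
        rw [Finset.disjoint_left]
        rintro y hy hy3
        obtain ⟨t, -, rfl⟩ := Finset.mem_image.mp hy
        simp only [Finset.mem_insert, Finset.mem_singleton] at hy3
        exact t.2 (by simpa using hy3)
      have hTcard : T.card = annihilation G' + 2 := by
        rw [hT, Finset.card_union_of_disjoint hdisj,
          Finset.card_image_of_injective _ Subtype.val_injective,
          Finset.card_erase_of_mem hxS, hcard3, hS'card']
        have : 1 ≤ S'.card := Finset.card_pos.mpr ⟨x, hxS⟩
        rw [hS'card'] at this
        omega
      have hTann : IsAnnSet G T := by
        unfold IsAnnSet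
        rw [hT, Finset.sum_union hdisj, hsum3,
          Finset.sum_image (fun a _ b _ h => Subtype.val_injective h)]
        have hrw : ∑ t ∈ S'.erase x, G.degree t.1 = ∑ t ∈ S'.erase x, G'.degree t :=
          Finset.sum_congr rfl (fun t _ => (hdall t).symm)
        have hsplit : ∑ t ∈ S'.erase x, G'.degree t + G'.degree x = ∑ t ∈ S', G'.degree t :=
          Finset.sum_erase_add _ _ hxS
        have hxdeg' : 3 ≤ G'.degree x := by rw [hdall x]; exact hxdeg
        have hann := hS'ann
        unfold IsAnnSet at hann
        rw [hrw]
        omega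
      have : annihilation G' + 2 ∈ {k | ∃ S : Finset V, IsAnnSet G S ∧ S.card = k} :=
        ⟨T, hTann, hTcard⟩
      exact le_csSup hbddG this
    · push_neg at hx
      obtain ⟨A, hAann, hAcard⟩ := Nat.sSup_mem hneG hbddG
      have hAcard' : A.card = annihilation G := hAcard
      have hmemA : ∀ y : V, G.degree y ≤ 2 → y ∈ A := by
        intro y hy
        by_contra hyA
        have := hstar A hAann hAcard y hyA
        omega
      set B : Finset V := S'.image Subtype.val ∪ ({u₁, u₂, u₃} : Finset V) with hB
      have hBsub : B ⊆ A := by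
        intro y hy
        rcases Finset.mem_union.mp hy with hy | hy
        · obtain ⟨t, ht, rfl⟩ := Finset.mem_image.mp hy
          have := hx t ht
          exact hmemA _ (by omega)
        · simp only [Finset.mem_insert, Finset.mem_singleton] at hy
          rcases hy with rfl | rfl | rfl
          · exact hmemA _ (le_of_eq hd1)
          · exact hmemA _ (le_of_eq hd2)
          · exact hmemA _ (le_of_eq hd3)
      have hdisj : Disjoint (S'.image Subtype.val) ({u₁, u₂, u₃} : Finset V) := by
        rw [Finset.disjoint_left]
        rintro y hy hy3
        obtain ⟨t, -, rfl⟩ := Finset.mem_image.mp hy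
        simp only [Finset.mem_insert, Finset.mem_singleton] at hy3
        exact t.2 (by simpa using hy3)
      have hBcard : B.card = annihilation G' + 3 := by
        rw [hB, Finset.card_union_of_disjoint hdisj,
          Finset.card_image_of_injective _ Subtype.val_injective, hcard3, hS'card']
      have : B.card ≤ A.card := Finset.card_le_card hBsub
      rw [hBcard, hAcard'] at this
      omega
  refine ⟨part1, part2, fun h => ?_⟩
  calc gamma2 G ≤ gamma2 G' + 2 := part1
    _ ≤ (annihilation G' + 1) + 2 := by omega
    _ = (annihilation G' + 2) + 1 := by ring
    _ ≤ annihilation G + 1 := by omega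
end
end

section
/- Let H be a nontrivial connected graph containing a cycle C and let w ∈ V(C) have degree 2 in H. Let F be the subdivided star S_s(K_{1,s+t}) with s ≥ 2, t ≥ 0, obtained from the star K_{1,s+t} by subdividing s of its edges exactly once, and let G be obtained from H and F by identifying w with the center of F. Set G' = G − V(F). Then γ₂(G) ≤ γ₂(G') + s + t + 1 and a(G) ≥ a(G') + s + t + 1; consequently γ₂(G') ≤ a(G') + 1 implies γ₂(G) ≤ a(G) + 1. -/
open Classical Finset
noncomputable section

/-- The graph obtained from `H` by identifying the vertex `w` with the center of the
subdivided star `S_s(K_{1,s+t})`: `Sum.inr (Sum.inl (Sum.inl i))` are the `s` middle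
vertices adjacent to `w`, `Sum.inr (Sum.inl (Sum.inr i))` their pendant leaves, and
`Sum.inr (Sum.inr j)` the `t` leaves adjacent to `w`. -/
def graftStar {V : Type*} (H : SimpleGraph V) (w : V) (s t : ℕ) :
    SimpleGraph (V ⊕ ((Fin s ⊕ Fin s) ⊕ Fin t)) :=
  SimpleGraph.fromRel (fun a b =>
    match a, b with
    | Sum.inl x, Sum.inl y => H.Adj x y
    | Sum.inl x, Sum.inr (Sum.inl (Sum.inl _)) => x = w
    | Sum.inl x, Sum.inr (Sum.inr _) => x = w
    | Sum.inr (Sum.inl (Sum.inl i)), Sum.inr (Sum.inl (Sum.inr i')) => i = i'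
    | _, _ => False)

/-!
A 2-dominating set of `G' = H - w` extends to one of `G` by adding the centre `w` and the
`s + t` degree-one vertices of the star: every middle vertex then sees `w` and its own pendant.
An annihilation set of `G'` extends by the `s + t` degree-one vertices and one middle vertex.
Their degrees add `s + t + 2`, and the old vertices gain at most `deg_H w` in degree, while `G`
has `deg_H w + 2s + t` more edges than `G'`; so `s ≥ 2` keeps the degree sum within `m(G)`.
-/

section Invariants
variable {V : Type*} [Fintype V] {G : SimpleGraph V} {S : Finset V}

lemma gamma2_le_card (hS : IsTwoDomSet G S) : gamma2 G ≤ #S :=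
  Nat.sInf_le ⟨S, hS, rfl⟩

lemma exists_isTwoDomSet_card_eq_gamma2 (G : SimpleGraph V) :
    ∃ S, IsTwoDomSet G S ∧ #S = gamma2 G :=
  Nat.sInf_mem (s := {k | ∃ S, IsTwoDomSet G S ∧ #S = k})
    ⟨_, univ, fun v hv => absurd (mem_univ v) hv, rfl⟩

lemma bddAbove_card_isAnnSet (G : SimpleGraph V) :
    BddAbove {k | ∃ S : Finset V, IsAnnSet G S ∧ #S = k} :=
  ⟨Fintype.card V, by rintro _ ⟨S, -, rfl⟩; exact card_le_univ S⟩

lemma card_le_annihilation (hS : IsAnnSet G S) : #S ≤ annihilation G :=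
  le_csSup (bddAbove_card_isAnnSet G) ⟨S, hS, rfl⟩

lemma exists_isAnnSet_card_eq_annihilation (G : SimpleGraph V) :
    ∃ S, IsAnnSet G S ∧ #S = annihilation G :=
  Nat.sSup_mem (s := {k | ∃ S, IsAnnSet G S ∧ #S = k}) ⟨0, ∅, by simp [IsAnnSet], rfl⟩
    (bddAbove_card_isAnnSet G)

end Invariants

namespace SimpleGraph
variable {V : Type*} [Fintype V] (H : SimpleGraph V) (w : V)

lemma degree_eq_sum_ite (G : SimpleGraph V) [DecidableRel G.Adj] (v : V) :
    G.degree v = ∑ u, if G.Adj v u then 1 else 0 := by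
  rw [← card_neighborFinset_eq_degree, neighborFinset_eq_filter, card_filter]

lemma degree_induce_ne_add_ite_adj (a : {x : V | x ≠ w}) :
    (H.induce {x | x ≠ w}).degree a + (if H.Adj a w then 1 else 0) = H.degree a := by
  rw [← card_neighborFinset_eq_degree, ← card_map, map_neighborFinset_induce,
    ← card_neighborFinset_eq_degree]
  have hN : H.neighborFinset a ∩ {x | x ≠ w}.toFinset = (H.neighborFinset a).erase w := by
    ext; simp [and_comm]
  split_ifs with hadj
  · rw [hN, card_erase_add_one (by simpa using hadj)]
  · rw [hN, erase_eq_of_notMem (by simpa using hadj), add_zero]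

lemma card_edgeFinset_induce_ne_add_degree :
    #(H.induce {x | x ≠ w}).edgeFinset + H.degree w = #H.edgeFinset := by
  have h := H.card_edgeFinset_induce_compl_singleton w
  rw [card_edgeFinset_deleteIncidenceSet] at h
  have := H.degree_le_card_edgeFinset w
  change #(H.induce {w}ᶜ).edgeFinset + H.degree w = #H.edgeFinset
  omega

lemma sum_degree_le_sum_degree_induce_ne_add (A : Finset {x : V | x ≠ w}) :
    ∑ a ∈ A, H.degree a ≤ ∑ a ∈ A, (H.induce {x | x ≠ w}).degree a + H.degree w := by
  simp_rw [← degree_induce_ne_add_ite_adj H w, sum_add_distrib, ← card_filter]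
  gcongr
  rw [← card_neighborFinset_eq_degree]
  refine card_le_card_of_injOn Subtype.val (fun a ha => ?_) Subtype.val_injective.injOn
  simpa [adj_comm] using (mem_filter.1 ha).2

end SimpleGraph

namespace GraftStar
variable {V : Type*} (H : SimpleGraph V) (w : V) {s t : ℕ}

def liftVertex : {x : V | x ≠ w} ↪ V ⊕ ((Fin s ⊕ Fin s) ⊕ Fin t) :=
  (Function.Embedding.subtype _).trans .inl

@[simp] lemma liftVertex_apply (a : {x : V | x ≠ w}) :
    liftVertex w (s := s) (t := t) a = .inl a := rfl

def leaf : Fin s ⊕ Fin t ↪ V ⊕ ((Fin s ⊕ Fin s) ⊕ Fin t) where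
  toFun := Sum.elim (fun i => .inr (.inl (.inr i))) (fun j => .inr (.inr j))
  inj' := by rintro (i | j) (i' | j') h <;> simp_all

@[simp] lemma leaf_inl (i : Fin s) : leaf (V := V) (t := t) (.inl i) = .inr (.inl (.inr i)) := rfl

@[simp] lemma leaf_inr (j : Fin t) : leaf (V := V) (s := s) (.inr j) = .inr (.inr j) := rfl

lemma disjoint_map_liftVertex_map_leaf (A : Finset {x : V | x ≠ w}) :
    Disjoint (A.map (liftVertex w)) (univ.map (leaf (s := s) (t := t))) := by
  simp only [disjoint_left, mem_map, mem_univ, true_and, not_exists]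
  rintro _ ⟨a, -, rfl⟩ (i | j) <;> simp

lemma mid_notMem_map_liftVertex_union_map_leaf (A : Finset {x : V | x ≠ w}) (i : Fin s) :
    .inr (.inl (.inl i)) ∉ A.map (liftVertex w) ∪ univ.map (leaf (s := s) (t := t)) := by
  simp only [mem_union, mem_map, mem_univ, true_and, not_or, not_exists, liftVertex_apply]
  exact ⟨by simp, by rintro (i' | j) <;> simp⟩

variable (s t)

@[simp] lemma adj_inl_inl (x y : V) :
    (graftStar H w s t).Adj (.inl x) (.inl y) ↔ H.Adj x y := by
  simp only [graftStar, SimpleGraph.fromRel_adj, ne_eq, Sum.inl.injEq]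
  exact ⟨fun h => h.2.elim id H.adj_symm, fun h => ⟨H.ne_of_adj h, .inl h⟩⟩

variable [Fintype V]

lemma degree_inl (x : V) :
    (graftStar H w s t).degree (.inl x) = H.degree x + if x = w then s + t else 0 := by
  rw [SimpleGraph.degree_eq_sum_ite, H.degree_eq_sum_ite]
  simp only [Fintype.sum_sum_type, adj_inl_inl]
  by_cases hx : x = w <;> simp [graftStar, hx]

lemma degree_mid (i : Fin s) : (graftStar H w s t).degree (.inr (.inl (.inl i))) = 2 := by
  rw [SimpleGraph.degree_eq_sum_ite]
  simp only [Fintype.sum_sum_type]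
  simp [graftStar]

lemma degree_leaf (l : Fin s ⊕ Fin t) : (graftStar H w s t).degree (leaf l) = 1 := by
  rw [SimpleGraph.degree_eq_sum_ite]
  cases l <;> simp only [leaf_inl, leaf_inr, Fintype.sum_sum_type] <;> simp [graftStar]

lemma card_edgeFinset : #(graftStar H w s t).edgeFinset = #H.edgeFinset + 2 * s + t := by
  have hsum := (graftStar H w s t).sum_degrees_eq_twice_card_edges
  have hpendant (i : Fin s) : (graftStar H w s t).degree (.inr (.inl (.inr i))) = 1 :=
    degree_leaf H w s t (.inl i)
  have hleaf (j : Fin t) : (graftStar H w s t).degree (.inr (.inr j)) = 1 :=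
    degree_leaf H w s t (.inr j)
  simp only [Fintype.sum_sum_type, degree_inl, degree_mid, hpendant, hleaf, sum_add_distrib,
    sum_ite_eq', mem_univ, if_true, sum_const, card_univ, Fintype.card_fin, smul_eq_mul,
    H.sum_degrees_eq_twice_card_edges] at hsum
  omega

lemma isTwoDomSet_insert_center {S : Finset {x : V | x ≠ w}}
    (hS : IsTwoDomSet (H.induce {x | x ≠ w}) S) :
    IsTwoDomSet (graftStar H w s t) (insert (.inl w) (S.map (liftVertex w) ∪ univ.map leaf)) := by
  have hleaf (l : Fin s ⊕ Fin t) :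
      leaf l ∈ insert (.inl w) (S.map (liftVertex w) ∪ univ.map leaf) :=
    mem_insert_of_mem (mem_union_right _ (mem_map_of_mem _ (mem_univ l)))
  rintro (x | (i | i) | j) hv
  · have hx : x ≠ w := by rintro rfl; exact hv (mem_insert_self _ _)
    have ha : (⟨x, hx⟩ : {x : V | x ≠ w}) ∉ S := fun h =>
      hv (mem_insert_of_mem (mem_union_left _ (mem_map_of_mem (liftVertex w) h)))
    refine (hS _ ha).trans (card_le_card_of_injOn (liftVertex w) (fun a ha => ?_)
      (liftVertex w).injective.injOn)
    simp only [coe_inter, Set.mem_inter_iff, mem_coe, SimpleGraph.mem_neighborFinset,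
      SimpleGraph.comap_adj, Function.Embedding.subtype_apply] at ha
    simp only [coe_inter, Set.mem_inter_iff, mem_coe, SimpleGraph.mem_neighborFinset]
    exact ⟨by simpa using ha.1,
      mem_insert_of_mem (mem_union_left _ (mem_map_of_mem _ ha.2))⟩
  · calc 2 = #{.inl w, .inr (.inl (.inr i))} := (card_pair (by simp)).symm
      _ ≤ _ := card_le_card fun v hv => by
        rcases mem_insert.1 hv with rfl | hv
        · simp only [mem_inter, SimpleGraph.mem_neighborFinset]
          exact ⟨by simp [graftStar], mem_insert_self _ _⟩
        · rw [mem_singleton.1 hv]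
          simp only [mem_inter, SimpleGraph.mem_neighborFinset]
          exact ⟨by simp [graftStar], hleaf (.inl i)⟩
  · exact absurd (hleaf (.inl i)) hv
  · exact absurd (hleaf (.inr j)) hv

lemma isAnnSet_insert_mid (hs : 2 ≤ s) {A : Finset {x : V | x ≠ w}}
    (hA : IsAnnSet (H.induce {x | x ≠ w}) A) :
    IsAnnSet (graftStar H w s t)
      (insert (.inr (.inl (.inl ⟨0, by omega⟩))) (A.map (liftVertex w) ∪ univ.map leaf)) := by
  have hlift : ∑ a ∈ A, (graftStar H w s t).degree (liftVertex w a) = ∑ a ∈ A, H.degree a :=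
    sum_congr rfl fun a _ => by
      rw [liftVertex_apply, degree_inl, if_neg a.2, add_zero]
  have hleaves : ∑ l, (graftStar H w s t).degree (leaf l) = s + t := by
    simp [degree_leaf]
  have hdegree := H.sum_degree_le_sum_degree_induce_ne_add w A
  have hedges := H.card_edgeFinset_induce_ne_add_degree w
  -- `convert` reconciles the classical `Fintype` instances that `IsAnnSet` was elaborated with.
  have hA' :
      ∑ a ∈ A, (H.induce {x | x ≠ w}).degree a ≤ #(H.induce {x | x ≠ w}).edgeFinset := by
    unfold IsAnnSet at hA
    convert hA
  unfold IsAnnSet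
  rw [sum_insert (mid_notMem_map_liftVertex_union_map_leaf w A _),
    sum_union (disjoint_map_liftVertex_map_leaf w A), sum_map, sum_map, hlift, hleaves,
    degree_mid, card_edgeFinset]
  omega

end GraftStar

section
variable {V : Type*} [Fintype V] (H : SimpleGraph V) (w : V) (s t : ℕ)
open GraftStar

theorem gamma2_graftStar_le :
    gamma2 (graftStar H w s t) ≤ gamma2 (H.induce {x | x ≠ w}) + s + t + 1 := by
  obtain ⟨S, hS, hcard⟩ := exists_isTwoDomSet_card_eq_gamma2 (H.induce {x | x ≠ w})
  calc gamma2 (graftStar H w s t)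
      _ ≤ #(insert (.inl w) (S.map (liftVertex w) ∪ univ.map leaf)) :=
        gamma2_le_card (isTwoDomSet_insert_center H w s t hS)
      _ ≤ #(S.map (liftVertex w) ∪ univ.map leaf) + 1 := card_insert_le _ _
      _ = _ := by
        rw [card_union_of_disjoint (disjoint_map_liftVertex_map_leaf w S), card_map, card_map,
          card_univ, Fintype.card_sum, Fintype.card_fin, Fintype.card_fin, hcard]
        ring

theorem annihilation_induce_add_le_annihilation_graftStar (hs : 2 ≤ s) :
    annihilation (H.induce {x | x ≠ w}) + s + t + 1 ≤ annihilation (graftStar H w s t) := by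
  obtain ⟨A, hA, hcard⟩ := exists_isAnnSet_card_eq_annihilation (H.induce {x | x ≠ w})
  have h := card_le_annihilation (isAnnSet_insert_mid H w s t hs hA)
  rwa [card_insert_of_notMem (mid_notMem_map_liftVertex_union_map_leaf w A _),
    card_union_of_disjoint (disjoint_map_liftVertex_map_leaf w A), card_map, card_map,
    card_univ, Fintype.card_sum, Fintype.card_fin, Fintype.card_fin, hcard, ← add_assoc] at h

end

theorem stmt7_general {V : Type*} [Fintype V] (H : SimpleGraph V) (w : V)
    (s t : ℕ) (hs : 2 ≤ s) :
    gamma2 (graftStar H w s t) ≤ gamma2 (H.induce {x : V | x ≠ w}) + s + t + 1 ∧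
    annihilation (H.induce {x : V | x ≠ w}) + s + t + 1 ≤ annihilation (graftStar H w s t) ∧
    (gamma2 (H.induce {x : V | x ≠ w}) ≤ annihilation (H.induce {x : V | x ≠ w}) + 1 →
      gamma2 (graftStar H w s t) ≤ annihilation (graftStar H w s t) + 1) := by
  have hgamma := gamma2_graftStar_le H w s t
  have hann := annihilation_induce_add_le_annihilation_graftStar H w s t hs
  exact ⟨hgamma, hann, fun h => by omega⟩

/-- Lemma 3.5: removing a subdivided star `S_s(K_{1,s+t})` (s ≥ 2) whose center is a
degree-2 vertex `w` on a cycle of `H`. Here `G' = G − V(F)` is `H` minus `w`. -/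
theorem stmt7 {V : Type*} [Fintype V] (H : SimpleGraph V) (hH : H.Connected)
    (hnontriv : 2 ≤ Fintype.card V) (w : V)
    (hcyc : ∃ (c : H.Walk w w), c.IsCycle) (hdw : H.degree w = 2)
    (s t : ℕ) (hs : 2 ≤ s) :
    gamma2 (graftStar H w s t) ≤ gamma2 (H.induce {x : V | x ≠ w}) + s + t + 1 ∧
    annihilation (H.induce {x : V | x ≠ w}) + s + t + 1 ≤ annihilation (graftStar H w s t) ∧
    (gamma2 (H.induce {x : V | x ≠ w}) ≤ annihilation (H.induce {x : V | x ≠ w}) + 1 →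
      gamma2 (graftStar H w s t) ≤ annihilation (graftStar H w s t) + 1) :=
  stmt7_general H w s t hs
end
end

section
/- If G is a connected graph with minimum degree δ(G) ≥ 3, then γ₂(G) ≤ ⌊n(G)/2⌋ ≤ a(G), and in particular γ₂(G) ≤ a(G) + 1. -/
open Classical Finset
noncomputable section

lemma card_inter_eq_sum {V : Type*} [Fintype V] (G : SimpleGraph V) (v : V) (S : Finset V) :
    (G.neighborFinset v ∩ S).card = ∑ u ∈ S, if G.Adj v u then 1 else 0 := by
  classical
  rw [inter_comm, ← Finset.filter_mem_eq_inter, Finset.card_filter]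
  refine Finset.sum_congr rfl fun u hu => by simp [SimpleGraph.mem_neighborFinset]

/-- Both sides of a maximum cut are 2-dominating when `δ(G) ≥ 3`. -/
lemma exists_maxcut {V : Type*} [Fintype V] (G : SimpleGraph V) (hδ : ∀ v : V, 3 ≤ G.degree v) :
    ∃ A : Finset V, (∀ v ∈ A, 2 ≤ (G.neighborFinset v ∩ Aᶜ).card) ∧
      (∀ v ∉ A, 2 ≤ (G.neighborFinset v ∩ A).card) := by
  classical
  set χ : V → V → ℕ := fun v u => if G.Adj v u then 1 else 0 with hχ
  have χsymm : ∀ v u, χ v u = χ u v := fun v u => by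
    simp only [hχ, G.adj_comm]
  have χself : ∀ v, χ v v = 0 := fun v => by simp [hχ]
  set cut : Finset V → ℕ := fun A => ∑ v ∈ A, ∑ u ∈ Aᶜ, χ v u with hcut
  obtain ⟨A, -, hA⟩ := Finset.exists_max_image (univ : Finset (Finset V)) cut ⟨∅, mem_univ _⟩
  have key : ∀ v, G.degree v = (G.neighborFinset v ∩ A).card + (G.neighborFinset v ∩ Aᶜ).card := by
    intro v
    rw [card_inter_eq_sum, card_inter_eq_sum, Finset.sum_add_sum_compl,
      ← card_inter_eq_sum G v univ, Finset.inter_univ,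
      SimpleGraph.card_neighborFinset_eq_degree]
  refine ⟨A, ?_, ?_⟩
  · intro v hv
    have h1 : cut A = (∑ u ∈ A.erase v, ∑ w ∈ Aᶜ, χ u w) + ∑ w ∈ Aᶜ, χ v w := by
      rw [hcut]; exact (Finset.sum_erase_add _ _ hv).symm
    have h2 : cut (A.erase v) =
        (∑ u ∈ A.erase v, χ u v) + ∑ u ∈ A.erase v, ∑ w ∈ Aᶜ, χ u w := by
      rw [hcut]
      simp only [Finset.compl_erase]
      rw [← Finset.sum_add_distrib]
      refine Finset.sum_congr rfl fun u hu => ?_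
      rw [Finset.sum_insert (by simp [hv])]
    have hle := hA (A.erase v) (mem_univ _)
    have hin : ∑ u ∈ A.erase v, χ u v = (G.neighborFinset v ∩ A).card := by
      rw [card_inter_eq_sum]
      calc ∑ u ∈ A.erase v, χ u v = ∑ u ∈ A.erase v, χ v u :=
            Finset.sum_congr rfl fun u _ => χsymm u v
        _ = ∑ u ∈ A, χ v u := Finset.sum_erase _ (χself v)
        _ = _ := rfl
    have hout : ∑ w ∈ Aᶜ, χ v w = (G.neighborFinset v ∩ Aᶜ).card :=
      (card_inter_eq_sum G v Aᶜ).symm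
    have hd := hδ v
    rw [key v] at hd
    rw [h1, h2, hin, hout] at hle
    omega
  · intro v hv
    have hv' : v ∈ Aᶜ := Finset.mem_compl.mpr hv
    have h1 : cut A = (∑ u ∈ A, ∑ w ∈ Aᶜ.erase v, χ u w) + ∑ u ∈ A, χ u v := by
      rw [hcut]
      rw [← Finset.sum_add_distrib]
      refine Finset.sum_congr rfl fun u hu => ?_
      exact (Finset.sum_erase_add _ _ hv').symm
    have h2 : cut (insert v A) =
        (∑ w ∈ Aᶜ.erase v, χ v w) + ∑ u ∈ A, ∑ w ∈ Aᶜ.erase v, χ u w := by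
      rw [hcut]
      simp only [Finset.compl_insert]
      rw [Finset.sum_insert hv]
    have hle := hA (insert v A) (mem_univ _)
    have hout : ∑ w ∈ Aᶜ.erase v, χ v w = (G.neighborFinset v ∩ Aᶜ).card := by
      rw [card_inter_eq_sum]
      calc ∑ w ∈ Aᶜ.erase v, χ v w = ∑ w ∈ Aᶜ, χ v w := Finset.sum_erase _ (χself v)
        _ = _ := rfl
    have hin : ∑ u ∈ A, χ u v = (G.neighborFinset v ∩ A).card := by
      rw [card_inter_eq_sum]
      exact Finset.sum_congr rfl fun u _ => χsymm u v
    have hd := hδ v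
    rw [key v] at hd
    rw [h1, h2, hin, hout] at hle
    omega

lemma gamma2_le_half {V : Type*} [Fintype V] (G : SimpleGraph V)
    (hδ : ∀ v : V, 3 ≤ G.degree v) : gamma2 G ≤ Fintype.card V / 2 := by
  classical
  obtain ⟨A, hAc, hAd⟩ := exists_maxcut G hδ
  have hAdom : IsTwoDomSet G A := fun v hv => hAd v hv
  have hAcdom : IsTwoDomSet G Aᶜ := fun v hv => hAc v (by simpa using hv)
  have hcards : A.card + Aᶜ.card = Fintype.card V := Finset.card_add_card_compl A
  rcases le_or_gt A.card (Fintype.card V / 2) with h | h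
  · exact le_trans (Nat.sInf_le ⟨A, hAdom, rfl⟩) h
  · exact le_trans (Nat.sInf_le ⟨Aᶜ, hAcdom, rfl⟩) (by omega)

lemma half_le_annihilation {V : Type*} [Fintype V] (G : SimpleGraph V) :
    Fintype.card V / 2 ≤ annihilation G := by
  classical
  set k := Fintype.card V / 2 with hkdef
  have hk : k ≤ Fintype.card V := Nat.div_le_self _ _
  have hne : (Finset.univ.powersetCard k : Finset (Finset V)).Nonempty := by
    rw [Finset.powersetCard_nonempty]
    simpa using hk
  obtain ⟨S, hSmem, hSmin⟩ := Finset.exists_min_image _ (fun S => ∑ v ∈ S, G.degree v) hne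
  rw [Finset.mem_powersetCard] at hSmem
  obtain ⟨-, hScard⟩ := hSmem
  have hcompl : k ≤ Sᶜ.card := by
    rw [Finset.card_compl, hScard]; omega
  obtain ⟨T, hTsub, hTcard⟩ := Finset.exists_subset_card_eq hcompl
  have h1 : ∑ v ∈ S, G.degree v ≤ ∑ v ∈ T, G.degree v :=
    hSmin T (Finset.mem_powersetCard.mpr ⟨Finset.subset_univ _, hTcard⟩)
  have h2 : ∑ v ∈ T, G.degree v ≤ ∑ v ∈ Sᶜ, G.degree v :=
    Finset.sum_le_sum_of_subset hTsub
  have h3 : (∑ v ∈ S, G.degree v) + ∑ v ∈ Sᶜ, G.degree v = ∑ v, G.degree v :=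
    Finset.sum_add_sum_compl S _
  have h4 : ∑ v, G.degree v = 2 * G.edgeFinset.card :=
    SimpleGraph.sum_degrees_eq_twice_card_edges G
  have hann : IsAnnSet G S := by unfold IsAnnSet; omega
  exact le_csSup ⟨Fintype.card V, fun x ⟨S, _, hc⟩ => hc ▸ Finset.card_le_univ S⟩
    ⟨S, hann, hScard⟩

/-- For a connected graph with minimum degree at least 3:
`γ₂(G) ≤ ⌊n(G)/2⌋ ≤ a(G)`, and in particular `γ₂(G) ≤ a(G) + 1`. -/
theorem stmt18 {V : Type*} [Fintype V] (G : SimpleGraph V) (hconn : G.Connected)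
    (hδ : ∀ v : V, 3 ≤ G.degree v) :
    gamma2 G ≤ Fintype.card V / 2 ∧
    Fintype.card V / 2 ≤ annihilation G ∧
    gamma2 G ≤ annihilation G + 1 := by
  have h1 := gamma2_le_half G hδ
  have h2 := half_le_annihilation G
  exact ⟨h1, h2, by omega⟩
end
end
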